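/- arXiv:math/0603343 — 2 statements merged into one kernel-verified Lean document; each statement's English description precedes it below -/
import Mathlib

section
/- In the Frohman–Gelca algebra A_t (t nonzero, not a root of unity), let k = Σ λ_{(p,q)} e_{(p,q)} be a finite linear combination in which every index (p,q) is nonzero with both coordinates even, and suppose Σ λ_{(p,q)} = 0. Then k lies in C(A_t), the span of commutators. -/
noncomputable section

def negRel : Setoid (ℤ × ℤ) where
  r v w := v = w ∨ v = -w
  iseqv := by
    refine ⟨fun v => Or.inl rfl, ?_, ?_⟩
    · rintro v w (rfl | rfl) <;> simp
    · rintro u v w (rfl | rfl) (h | h) <;> simp_all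

/-- The index set `ℤ² / ±1`. -/
abbrev Q2 := Quotient negRel

/-- The underlying vector space of the Frohman–Gelca algebra: the free `ℂ`-module on `ℤ²/±1`. -/
abbrev FG := Q2 →₀ ℂ

/-- The basis vector `e_{(p,q)}`. -/
def e (v : ℤ × ℤ) : FG := Finsupp.single (Quotient.mk negRel v) 1

lemma e_neg (v : ℤ × ℤ) : e (-v) = e v := by
  unfold e
  congr 1
  exact Quotient.sound (Or.inr rfl)

/-- The determinant `p s - q r`. -/
def det (v w : ℤ × ℤ) : ℤ := v.1 * w.2 - v.2 * w.1

/-- Product-to-sum formula on representatives. -/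
def mulB (t : ℂ) (v w : ℤ × ℤ) : FG :=
  t ^ (det v w) • e (v + w) + t ^ (-(det v w)) • e (v - w)

lemma mulB_negL (t : ℂ) (v w : ℤ × ℤ) : mulB t (-v) w = mulB t v w := by
  unfold mulB
  have hd : det (-v) w = -(det v w) := by simp [det]; ring
  rw [hd, neg_neg, show -v + w = -(v - w) by abel, show -v - w = -(v + w) by abel,
    e_neg, e_neg, add_comm]

lemma mulB_negR (t : ℂ) (v w : ℤ × ℤ) : mulB t v (-w) = mulB t v w := by
  unfold mulB
  have hd : det v (-w) = -(det v w) := by simp [det]; ring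
  rw [hd, neg_neg, show v + -w = v - w by abel, show v - -w = v + w by abel, add_comm]

/-- Product-to-sum formula on the quotient `ℤ²/±1`. -/
def qmulB (t : ℂ) : Q2 → Q2 → FG :=
  Quotient.lift₂ (mulB t) (by
    rintro a b a' b' (rfl | rfl) (rfl | rfl)
    · rfl
    · rw [mulB_negR]
    · rw [mulB_negL]
    · rw [mulB_negL, mulB_negR])

/-- Multiplication in the Frohman–Gelca algebra, extended bilinearly. -/
def fgMul (t : ℂ) (a b : FG) : FG :=
  a.sum fun x c => b.sum fun y d => (c * d) • qmulB t x y

/-- The span of commutators `C(A_t)`. -/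
def commSpan (t : ℂ) : Submodule ℂ FG :=
  Submodule.span ℂ {x | ∃ a b : FG, x = fgMul t a b - fgMul t b a}


lemma tpow_ne (t : ℂ) (ht : t ≠ 0) (hroot : ∀ n : ℕ, 0 < n → t ^ n ≠ 1)
    (d : ℤ) (hd : d ≠ 0) : t ^ d - t ^ (-d) ≠ 0 := by
  intro h
  have h1 : t ^ d = t ^ (-d) := by linear_combination h
  have h2 : t ^ (2 * d) = 1 := by
    rw [two_mul, zpow_add₀ ht]
    nth_rewrite 1 [h1]
    rw [← zpow_add₀ ht]
    simp
  have hm : 0 < (2 * d).natAbs := by omega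
  apply hroot _ hm
  rcases Int.natAbs_eq (2 * d) with he | he
  · rw [← zpow_natCast, ← he, h2]
  · have hc : ((2 * d).natAbs : ℤ) = -(2 * d) := by omega
    rw [← zpow_natCast, hc, zpow_neg, h2, inv_one]

lemma fgMul_e (t : ℂ) (a b : ℤ × ℤ) : fgMul t (e a) (e b) = mulB t a b := by
  unfold fgMul e
  rw [Finsupp.sum_single_index, Finsupp.sum_single_index]
  · simp only [one_mul, one_smul]
    rfl
  · simp
  · simp [Finsupp.sum]

lemma comm_mem (t : ℂ) (ht : t ≠ 0) (hroot : ∀ n : ℕ, 0 < n → t ^ n ≠ 1)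
    (a b : ℤ × ℤ) (hd : det a b ≠ 0) :
    e (a + b) - e (a - b) ∈ commSpan t := by
  have hgen : fgMul t (e a) (e b) - fgMul t (e b) (e a) ∈ commSpan t :=
    Submodule.subset_span ⟨e a, e b, rfl⟩
  rw [fgMul_e, fgMul_e] at hgen
  have hba : det b a = -det a b := by simp [det]; ring
  have hform : mulB t a b - mulB t b a
      = (t ^ (det a b) - t ^ (-det a b)) • (e (a + b) - e (a - b)) := by
    unfold mulB
    rw [hba, neg_neg, show b + a = a + b by abel, show b - a = -(a - b) by abel, e_neg]
    module
  rw [hform] at hgen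
  have hc : (t ^ (det a b) - t ^ (-det a b)) ≠ 0 := tpow_ne t ht hroot _ hd
  have := Submodule.smul_mem (commSpan t) (t ^ (det a b) - t ^ (-det a b))⁻¹ hgen
  rwa [inv_smul_smul₀ hc] at this

lemma even_diff_mem (t : ℂ) (ht : t ≠ 0) (hroot : ∀ n : ℕ, 0 < n → t ^ n ≠ 1)
    (u w : ℤ × ℤ) (hu1 : Even u.1) (hu2 : Even u.2) (hw1 : Even w.1) (hw2 : Even w.2)
    (hdet : det u w ≠ 0) : e u - e w ∈ commSpan t := by
  obtain ⟨p, hp⟩ := hu1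
  obtain ⟨q, hq⟩ := hu2
  obtain ⟨r, hr⟩ := hw1
  obtain ⟨s, hs⟩ := hw2
  have hu : u = ((p + r, q + s) : ℤ × ℤ) + (p - r, q - s) := by
    ext <;> simp <;> omega
  have hw : w = ((p + r, q + s) : ℤ × ℤ) - (p - r, q - s) := by
    ext <;> simp <;> omega
  have hd : det (p + r, q + s) (p - r, q - s) ≠ 0 := by
    simp only [det] at hdet ⊢
    intro h
    apply hdet
    rw [hp, hq, hr, hs]
    linear_combination (-2 : ℤ) * h
  rw [hu, hw]
  exact comm_mem t ht hroot _ _ hd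

lemma step_mem (t : ℂ) (ht : t ≠ 0) (hroot : ∀ n : ℕ, 0 < n → t ^ n ≠ 1)
    (v : ℤ × ℤ) (hv0 : v ≠ 0) (h1 : Even v.1) (h2 : Even v.2) :
    e v - e (2, 0) ∈ commSpan t := by
  by_cases hv2 : v.2 = 0
  · have hv1 : v.1 ≠ 0 := by
      intro h; apply hv0; ext <;> simp [h, hv2]
    have ha : e v - e (0, 2) ∈ commSpan t := by
      apply even_diff_mem t ht hroot v (0, 2) h1 h2 (by simp) (by decide)
      simp [det]; omega
    have hb : e (0, 2) - e (2, 0) ∈ commSpan t := by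
      apply even_diff_mem t ht hroot (0, 2) (2, 0) (by simp) (by decide) (by decide) (by simp)
      decide
    have := Submodule.add_mem (commSpan t) ha hb
    rwa [sub_add_sub_cancel] at this
  · apply even_diff_mem t ht hroot v (2, 0) h1 h2 (by decide) (by simp)
    simp [det]; omega

theorem stmt9 (t : ℂ) (ht : t ≠ 0) (hroot : ∀ n : ℕ, 0 < n → t ^ n ≠ 1)
    (k : FG)
    (hk : ∀ x ∈ k.support, ∃ v : ℤ × ℤ,
      x = Quotient.mk negRel v ∧ v ≠ 0 ∧ Even v.1 ∧ Even v.2)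
    (hsum : (k.sum fun _ c => c) = 0) :
    k ∈ commSpan t := by
  have hk' : k = k.sum fun x c => c • (Finsupp.single x 1 - e (2, 0)) := by
    have h1 : (k.sum fun x c => c • (Finsupp.single x 1 : FG))
        = k.sum fun x c => Finsupp.single x c := by
      apply Finsupp.sum_congr
      intro x _
      rw [Finsupp.smul_single', mul_one]
    have h2 : (k.sum fun _ c => c • e (2, 0)) = (k.sum fun _ c => c) • e (2, 0) := by
      rw [Finsupp.sum, Finsupp.sum, Finset.sum_smul]
    calc k = k.sum fun x c => Finsupp.single x c := (Finsupp.sum_single k).symm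
      _ = _ := by
        simp only [smul_sub]
        rw [Finsupp.sum_sub, h1, h2, hsum, zero_smul, sub_zero]
  rw [hk']
  apply Submodule.sum_mem
  intro x hx
  apply Submodule.smul_mem
  obtain ⟨v, hxv, hv0, he1, he2⟩ := hk x hx
  rw [hxv]
  exact step_mem t ht hroot v hv0 he1 he2

end
end

section
/- In the Frohman–Gelca algebra A_t (t nonzero, not a root of unity), the kernel of the parity map φ : A_t → ℂ⁵ equals C(A_t), the linear span of commutators. Consequently A_t / C(A_t) is a five-dimensional complex vector space. -/
noncomputable section

/-- The class of a pair: `0` for `(0,0)`, then `ee`, `eo`, `oe`, `oo`. -/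
def cls (v : ℤ × ℤ) : Fin 5 :=
  if v = 0 then 0
  else if Even v.1 then (if Even v.2 then 1 else 2)
  else if Even v.2 then 3 else 4

def qcls : Q2 → Fin 5 :=
  Quotient.lift cls (by
    rintro a b (rfl | rfl)
    · rfl
    · simp [cls, neg_eq_zero, Prod.fst_neg, Prod.snd_neg])

/-- The parity map `φ : A_t → ℂ⁵`. -/
def phiL : FG →ₗ[ℂ] (Fin 5 → ℂ) :=
  Finsupp.lsum ℂ fun x => LinearMap.toSpanSingleton ℂ (Fin 5 → ℂ) (Pi.single (qcls x) 1)

/-!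
Writing `d = det v w`, the product formula gives
`e_v * e_w - e_w * e_v = (t ^ d - t ^ (-d)) • (e_{v+w} - e_{v-w})`. When `d ≠ 0` the vectors `v ± w` are
nonzero and have the same parities, so `φ` kills every commutator. Conversely, `t ^ d ≠ t ^ (-d)` because
`t` is not a root of unity, so `e_{u+2w} - e_u ∈ C(A_t)` whenever `det u w ≠ 0`; when `u` and `w` are
parallel, one pivots through `u + 2 J u`, `J` the rotation by a right angle. Hence every nonzero `e_u`
is congruent modulo `C(A_t)` to the chosen representative of its parity class, i.e. `x - s (φ x) ∈ C(A_t)`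
for the section `s` of `φ` given by these representatives. This yields `ker φ ≤ C(A_t)`, and `φ ∘ s = id`
makes `φ` onto, so `A_t / C(A_t) ≅ ℂ⁵`.
-/

lemma zpow_sub_zpow_neg_ne_zero {K : Type*} [DivisionRing K] {t : K} (ht : t ≠ 0)
    (hroot : ∀ n : ℕ, 0 < n → t ^ n ≠ 1) {d : ℤ} (hd : d ≠ 0) : t ^ d - t ^ (-d) ≠ 0 := by
  intro h
  have h2d : t ^ (2 * d) = 1 := by
    rw [show 2 * d = d - -d by ring, zpow_sub₀ ht, sub_eq_zero.mp h, div_self (zpow_ne_zero _ ht)]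
  refine hroot (2 * d).natAbs (by omega) ?_
  rcases Int.natAbs_eq (2 * d) with h | h <;> rw [h] at h2d
  · rwa [zpow_natCast] at h2d
  · rwa [zpow_neg, zpow_natCast, inv_eq_one] at h2d

lemma det_mul_self_add_dot_mul_self (a b : ℤ × ℤ) :
    det a b * det a b + (a.1 * b.1 + a.2 * b.2) * (a.1 * b.1 + a.2 * b.2) =
      (a.1 * a.1 + a.2 * a.2) * (b.1 * b.1 + b.2 * b.2) := by
  simp only [det]
  ring

lemma mul_self_add_mul_self_ne_zero {a : ℤ × ℤ} (ha : a ≠ 0) : a.1 * a.1 + a.2 * a.2 ≠ 0 :=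
  fun h => ha (Prod.ext_iff.mpr (mul_self_add_mul_self_eq_zero.mp h))

lemma dot_ne_zero_of_det_eq_zero {a b : ℤ × ℤ} (ha : a ≠ 0) (hb : b ≠ 0) (h : det a b = 0) :
    a.1 * b.1 + a.2 * b.2 ≠ 0 := by
  intro hdot
  have := det_mul_self_add_dot_mul_self a b
  rw [h, hdot, zero_mul, add_zero] at this
  exact mul_ne_zero (mul_self_add_mul_self_ne_zero ha) (mul_self_add_mul_self_ne_zero hb) this.symm

lemma cls_eq_zero_iff {u : ℤ × ℤ} : cls u = 0 ↔ u = 0 := by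
  unfold cls
  split_ifs <;> simp_all

lemma cls_add_two_smul {u w : ℤ × ℤ} (hu : u ≠ 0) (huw : u + 2 • w ≠ 0) :
    cls (u + 2 • w) = cls u := by
  simp only [cls, if_neg hu, if_neg huw]
  simp [Int.even_add]

lemma exists_eq_add_two_smul_of_cls_eq {u u' : ℤ × ℤ} (hu : u ≠ 0) (hu' : u' ≠ 0)
    (h : cls u = cls u') : ∃ w, u' = u + 2 • w := by
  suffices Even (u'.1 - u.1) ∧ Even (u'.2 - u.2) by
    obtain ⟨⟨a, ha⟩, ⟨b, hb⟩⟩ := this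
    exact ⟨(a, b), Prod.ext (by simp; omega) (by simp; omega)⟩
  simp only [cls, hu, hu', if_false, Int.even_sub] at h ⊢
  split_ifs at h <;> simp_all [-Int.not_even_iff_odd]

lemma phiL_e (u : ℤ × ℤ) : phiL (e u) = Pi.single (cls u) 1 := by
  simp [phiL, e]
  rfl

lemma fgMul_e_e (t : ℂ) (v w : ℤ × ℤ) : fgMul t (e v) (e w) = mulB t v w := by
  unfold fgMul e
  rw [Finsupp.sum_single_index, Finsupp.sum_single_index]
  · rw [one_mul, one_smul]
    rfl
  · simp
  · simp

lemma mulB_sub_mulB_swap (t : ℂ) (v w : ℤ × ℤ) :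
    mulB t v w - mulB t w v = (t ^ det v w - t ^ (-det v w)) • (e (v + w) - e (v - w)) := by
  have hdet : det w v = -det v w := by simp only [det]; ring
  rw [mulB, mulB, hdet, neg_neg, add_comm w v, ← neg_sub v w, e_neg]
  module

lemma phiL_e_add_eq_phiL_e_sub {v w : ℤ × ℤ} (hd : det v w ≠ 0) :
    phiL (e (v + w)) = phiL (e (v - w)) := by
  have hsub : v - w ≠ 0 := fun h => hd (by rw [sub_eq_zero.mp h]; simp only [det]; ring)
  have hadd : v + w ≠ 0 := fun h => hd (by rw [eq_neg_of_add_eq_zero_left h]; simp only [det, Prod.fst_neg, Prod.snd_neg]; ring)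
  rw [show v + w = v - w + 2 • w by module] at hadd ⊢
  rw [phiL_e, phiL_e, cls_add_two_smul hsub hadd]

lemma phiL_mulB_comm (t : ℂ) (v w : ℤ × ℤ) : phiL (mulB t v w) = phiL (mulB t w v) := by
  rw [← sub_eq_zero, ← map_sub, mulB_sub_mulB_swap, map_smul, map_sub]
  by_cases hd : det v w = 0
  · simp [hd]
  · rw [phiL_e_add_eq_phiL_e_sub hd, sub_self, smul_zero]

lemma phiL_qmulB_comm (t : ℂ) (x y : Q2) : phiL (qmulB t x y) = phiL (qmulB t y x) :=
  Quotient.inductionOn₂ x y (phiL_mulB_comm t)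

lemma phiL_fgMul_comm (t : ℂ) (a b : FG) : phiL (fgMul t a b) = phiL (fgMul t b a) := by
  simp only [fgMul, map_finsuppSum, map_smul]
  rw [Finsupp.sum_comm]
  refine Finsupp.sum_congr fun y _ => Finsupp.sum_congr fun x _ => ?_
  rw [mul_comm, phiL_qmulB_comm]

lemma commSpan_le_ker_phiL (t : ℂ) : commSpan t ≤ LinearMap.ker phiL := by
  rw [commSpan, Submodule.span_le]
  rintro _ ⟨a, b, rfl⟩
  simp [phiL_fgMul_comm t a b]

def clsRep : Fin 5 → ℤ × ℤ := ![0, (2, 0), (0, 1), (1, 0), (1, 1)]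

lemma cls_clsRep (c : Fin 5) : cls (clsRep c) = c := by
  fin_cases c <;> decide

def phiLSection : (Fin 5 → ℂ) →ₗ[ℂ] FG := Fintype.linearCombination ℂ (e ∘ clsRep)

lemma phiLSection_single (c : Fin 5) : phiLSection (Pi.single c 1) = e (clsRep c) := by
  rw [phiLSection, Fintype.linearCombination_apply_single, one_smul, Function.comp_apply]

lemma phiL_comp_phiLSection : phiL ∘ₗ phiLSection = LinearMap.id := by
  refine LinearMap.pi_ext' fun c => LinearMap.ext_ring ?_
  simp [phiLSection_single, phiL_e, cls_clsRep]

lemma phiL_surjective : Function.Surjective phiL :=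
  LinearMap.surjective_of_comp_eq_id _ _ phiL_comp_phiLSection

section Commutators

variable {t : ℂ}

lemma e_add_sub_e_sub_mem_commSpan (ht : t ≠ 0) (hroot : ∀ n : ℕ, 0 < n → t ^ n ≠ 1)
    {v w : ℤ × ℤ} (hd : det v w ≠ 0) : e (v + w) - e (v - w) ∈ commSpan t := by
  have hmem : fgMul t (e v) (e w) - fgMul t (e w) (e v) ∈ commSpan t :=
    Submodule.subset_span ⟨e v, e w, rfl⟩
  rwa [fgMul_e_e, fgMul_e_e, mulB_sub_mulB_swap,
    Submodule.smul_mem_iff _ (zpow_sub_zpow_neg_ne_zero ht hroot hd)] at hmem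

lemma e_add_two_smul_sub_e_mem_commSpan_of_det_ne_zero (ht : t ≠ 0)
    (hroot : ∀ n : ℕ, 0 < n → t ^ n ≠ 1) {u w : ℤ × ℤ} (hd : det u w ≠ 0) :
    e (u + 2 • w) - e u ∈ commSpan t := by
  have hdet : det (u + w) w = det u w := by simp only [det, Prod.fst_add, Prod.snd_add]; ring
  have := e_add_sub_e_sub_mem_commSpan ht hroot (hdet ▸ hd)
  rwa [add_sub_cancel_right, show u + w + w = u + 2 • w by module] at this

lemma e_add_two_smul_sub_e_mem_commSpan (ht : t ≠ 0) (hroot : ∀ n : ℕ, 0 < n → t ^ n ≠ 1)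
    {u w : ℤ × ℤ} (hu : u ≠ 0) (huw : u + 2 • w ≠ 0) : e (u + 2 • w) - e u ∈ commSpan t := by
  by_cases hd : det u w = 0
  swap
  · exact e_add_two_smul_sub_e_mem_commSpan_of_det_ne_zero ht hroot hd
  set r : ℤ × ℤ := (u.2, -u.1)
  have hr : det u r ≠ 0 := by
    have : det u r = -(u.1 * u.1 + u.2 * u.2) := by simp only [det, r]; ring
    rw [this, neg_ne_zero]
    exact mul_self_add_mul_self_ne_zero hu
  have hrw : det (u + 2 • w) (r - w) ≠ 0 := by
    have hpar : det u (u + 2 • w) = 0 := by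
      simp only [det, Prod.fst_add, Prod.snd_add, Prod.smul_fst, Prod.smul_snd] at hd ⊢
      linear_combination 2 * hd
    have : det (u + 2 • w) (r - w) = -(u.1 * (u + 2 • w).1 + u.2 * (u + 2 • w).2) := by
      simp only [det, r, Prod.fst_add, Prod.snd_add, Prod.fst_sub, Prod.snd_sub, Prod.smul_fst,
        Prod.smul_snd] at hd ⊢
      linear_combination -hd
    rw [this, neg_ne_zero]
    exact dot_ne_zero_of_det_eq_zero hu huw hpar
  have h₁ := e_add_two_smul_sub_e_mem_commSpan_of_det_ne_zero ht hroot hr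
  have h₂ := e_add_two_smul_sub_e_mem_commSpan_of_det_ne_zero ht hroot hrw
  rw [show u + 2 • w + 2 • (r - w) = u + 2 • r by module] at h₂
  simpa using sub_mem h₁ h₂

lemma e_sub_e_clsRep_cls_mem_commSpan (ht : t ≠ 0)
    (hroot : ∀ n : ℕ, 0 < n → t ^ n ≠ 1) (u : ℤ × ℤ) :
    e u - e (clsRep (cls u)) ∈ commSpan t := by
  by_cases hu : u = 0
  · simp [hu, cls, clsRep]
  have hrep : clsRep (cls u) ≠ 0 := fun h =>
    hu (cls_eq_zero_iff.mp (by rw [← cls_clsRep (cls u), h, cls_eq_zero_iff]))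
  obtain ⟨w, hw⟩ := exists_eq_add_two_smul_of_cls_eq hrep hu (cls_clsRep _)
  have := e_add_two_smul_sub_e_mem_commSpan ht hroot hrep (hw ▸ hu)
  rwa [← hw] at this

lemma sub_phiLSection_phiL_mem_commSpan (ht : t ≠ 0)
    (hroot : ∀ n : ℕ, 0 < n → t ^ n ≠ 1) (x : FG) :
    x - phiLSection (phiL x) ∈ commSpan t := by
  induction x using Finsupp.induction_linear with
  | zero => simp
  | add x y hx hy =>
    rw [map_add, map_add, add_sub_add_comm]
    exact add_mem hx hy
  | single q c =>
    induction q using Quotient.ind with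
    | _ u =>
      rw [← Finsupp.smul_single_one, map_smul, map_smul, ← smul_sub]
      refine Submodule.smul_mem _ c ?_
      change e u - phiLSection (phiL (e u)) ∈ commSpan t
      rw [phiL_e, phiLSection_single]
      exact e_sub_e_clsRep_cls_mem_commSpan ht hroot u

lemma ker_phiL_le_commSpan (ht : t ≠ 0) (hroot : ∀ n : ℕ, 0 < n → t ^ n ≠ 1) :
    LinearMap.ker phiL ≤ commSpan t := fun x hx => by
  simpa [LinearMap.mem_ker.mp hx] using sub_phiLSection_phiL_mem_commSpan ht hroot x

end Commutators

theorem stmt10 (t : ℂ) (ht : t ≠ 0) (hroot : ∀ n : ℕ, 0 < n → t ^ n ≠ 1) :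
    LinearMap.ker phiL = commSpan t ∧
      Module.finrank ℂ (FG ⧸ commSpan t) = 5 := by
  have hker : LinearMap.ker phiL = commSpan t :=
    le_antisymm (ker_phiL_le_commSpan ht hroot) (commSpan_le_ker_phiL t)
  refine ⟨hker, ?_⟩
  rw [← hker, (phiL.quotKerEquivOfSurjective phiL_surjective).finrank_eq, Module.finrank_fin_fun]

end
end
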